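/- arXiv:2208.01443 — 3 statements merged into one kernel-verified Lean document; each statement's English description precedes it below -/
import Mathlib

section
/- Fix k ≥ 1 and let C = (F, Init, P) be a deterministic transition system over input type I and state type S. If the BMC check of depth k-1 passes in C, i.e., every initialized trace of C satisfies P (x n) (s n) for all n < k, then the BMC check of depth 0 passes in the witness system C'_k, i.e., for every initial state w of C'_k and every input i, P'_k i w holds. -/
/-!
In an initial state of the witness system only the last initialization bit is set, so `p0`
and `p1` hold vacuously and `p2`, `p3` only concern the last latch copy `ℓ (k-1)`, which lies
in `Init`. There `P i (ℓ (k-1))` is the `n = 0` instance of the BMC check, applied to the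
trace that starts in `ℓ (k-1)` and reads the constant input `i`.
-/

/-- A (deterministic) trace: `s (n+1) = F (x n) (s n)` for all `n`. -/
def IsTrace {I S : Type*} (F : I → S → S) (x : ℕ → I) (s : ℕ → S) : Prop :=
  ∀ n, s (n + 1) = F (x n) (s n)

/-- The system `(F, Init, P)` is safe: every initialized trace satisfies the property. -/
def Safe {I S : Type*} (F : I → S → S) (Init : Set S) (P : I → S → Prop) : Prop :=
  ∀ x s, IsTrace F x s → s 0 ∈ Init → ∀ n, P (x n) (s n)

/-- `P` is `k`-inductive in `(F, Init, P)`: BMC of depth `k-1` and consecution of depth `k`. -/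
def KInductive {I S : Type*} (k : ℕ) (F : I → S → S) (Init : Set S) (P : I → S → Prop) :
    Prop :=
  (∀ x s, IsTrace F x s → s 0 ∈ Init → ∀ n < k, P (x n) (s n)) ∧
  (∀ x s, IsTrace F x s → (∀ n < k, P (x n) (s n)) → P (x k) (s k))

/-- The state type of the witness system: `k` copies of the latches,
`k-1` copies of the inputs, and `k` initialization bits. -/
abbrev WState (k : ℕ) (I S : Type*) : Type _ :=
  (Fin k → S) × (Fin (k - 1) → I) × (Fin k → Bool)

/-- The transition function of the witness system. -/
def WTrans {I S : Type*} (k : ℕ) (F : I → S → S) (i : I) (w : WState k I S) :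
    WState k I S :=
  ⟨fun j => if _h : (j : ℕ) = k - 1 then F i (w.1 j) else w.1 ⟨(j : ℕ) + 1, by omega⟩,
   fun j => if _h : (j : ℕ) = k - 2 then i else w.2.1 ⟨(j : ℕ) + 1, by omega⟩,
   fun j => if _h : (j : ℕ) = k - 1 then w.2.2 j else w.2.2 ⟨(j : ℕ) + 1, by omega⟩⟩

/-- The initial states of the witness system. -/
def WInit (k : ℕ) (hk : 0 < k) (I : Type*) {S : Type*} (Init : Set S) :
    Set (WState k I S) :=
  {w | w.1 ⟨k - 1, by omega⟩ ∈ Init ∧ w.2.2 ⟨k - 1, by omega⟩ = true ∧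
       ∀ j : Fin k, (j : ℕ) < k - 1 → w.2.2 j = false}

/-- The extended input sequence `X`: `X j = x j` for `j < k - 1` and `X (k-1) = i`. -/
def WX {I : Type*} (k : ℕ) (i : I) (x : Fin (k - 1) → I) (j : Fin k) : I :=
  if h : (j : ℕ) = k - 1 then i else x ⟨(j : ℕ), by omega⟩

/-- The property of the witness system: the conjunction of `p0`–`p4`. -/
def WProp {I S : Type*} (k : ℕ) (hk : 0 < k) (F : I → S → S) (Init : Set S)
    (P : I → S → Prop) (i : I) (w : WState k I S) : Prop :=
  (∀ j : Fin k, ∀ hj : (j : ℕ) < k - 1,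
      w.2.2 j = true → w.2.2 ⟨(j : ℕ) + 1, by omega⟩ = true) ∧
  (∀ j : Fin k, ∀ hj : (j : ℕ) < k - 1,
      w.2.2 j = true → w.1 ⟨(j : ℕ) + 1, by omega⟩ = F (WX k i w.2.1 j) (w.1 j)) ∧
  (∀ j : Fin k, w.2.2 j = true → P (WX k i w.2.1 j) (w.1 j)) ∧
  (∀ j : Fin k, 1 ≤ (j : ℕ) →
      w.2.2 ⟨(j : ℕ) - 1, by omega⟩ = false → w.2.2 j = true → w.1 j ∈ Init) ∧
  (w.2.2 ⟨k - 1, by omega⟩ = true)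

theorem isTrace_iterate {I S : Type*} (F : I → S → S) (i : I) (s₀ : S) :
    IsTrace F (fun _ => i) (fun n => (F i)^[n] s₀) :=
  fun n => Function.iterate_succ_apply' (F i) n s₀

theorem prop_of_mem_init {k : ℕ} {I S : Type*} {F : I → S → S} {Init : Set S}
    {P : I → S → Prop} (hk : 0 < k)
    (hbmc : ∀ x s, IsTrace F x s → s 0 ∈ Init → ∀ n < k, P (x n) (s n))
    {s₀ : S} (hs₀ : s₀ ∈ Init) (i : I) : P i s₀ :=
  hbmc _ _ (isTrace_iterate F i s₀) hs₀ 0 hk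

theorem WX_last {I : Type*} {k : ℕ} (hk : 0 < k) (i : I) (x : Fin (k - 1) → I) :
    WX k i x ⟨k - 1, by omega⟩ = i :=
  dif_pos rfl

theorem eq_last_of_mem_WInit {k : ℕ} {hk : 0 < k} {I S : Type*} {Init : Set S}
    {w : WState k I S} (hw : w ∈ WInit k hk I Init) :
    ∀ ⦃j : Fin k⦄, w.2.2 j = true → j = ⟨k - 1, by omega⟩ := by
  intro j hj
  apply Fin.ext
  by_contra hne
  have hlt : (j : ℕ) < k - 1 := by
    have := j.isLt
    simp only at hne
    omega
  simp [hw.2.2 j hlt] at hj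

/-- If the BMC check of depth `k-1` passes in `C`, then the BMC check of
depth `0` passes in the witness system `C'_k`. -/
theorem witness_bmc (k : ℕ) (hk : 0 < k) {I S : Type*}
    (F : I → S → S) (Init : Set S) (P : I → S → Prop)
    (hbmc : ∀ x s, IsTrace F x s → s 0 ∈ Init → ∀ n < k, P (x n) (s n)) :
    ∀ w ∈ WInit k hk I Init, ∀ i : I, WProp k hk F Init P i w := by
  intro w hw i
  have hlast := eq_last_of_mem_WInit hw
  refine ⟨?p0, ?p1, ?p2, ?p3, hw.2.1⟩
  case p0 | p1 =>
    intro j hj hb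
    have := Fin.val_eq_of_eq (hlast hb)
    simp only at this
    omega
  case p2 =>
    intro j hb
    rw [hlast hb, WX_last hk]
    exact prop_of_mem_init hk hbmc hw.1 i
  case p3 =>
    intro j _ _ hb
    rw [hlast hb]
    exact hw.1
end

section
/- Fix k ≥ 1 and let C = (F, Init, P) be a deterministic transition system over input type I and state type S. If P is k-inductive in C, then P'_k is 1-inductive in the witness system C'_k, i.e., (BMC) for every initial state w of C'_k and every input i, P'_k i w holds, and (consecution) for every witness state w and all inputs i0, i1, P'_k i0 w implies P'_k i1 (F'_k i0 w). -/
/-! A witness state satisfying `P'_k` stores a window of the last `k` states and inputs of a run.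
Its set bits form a suffix `ℓ m, …, ℓ (k-1)` of the window that is a genuine trace segment on which
`P` holds, starting in `Init` unless `m = 0`. One more transition of `C` extends this segment by
one state. If the extended segment is shorter than `k + 1`, it is an initialized trace and BMC gives
`P` at its end; otherwise `P` holds at its first `k` positions and consecution applies. All other
conjuncts of `P'_k` survive because `F'_k` merely shifts the window. -/

def extendFin {k : ℕ} {α : Type*} (f : Fin k → α) (a : α) (t : ℕ) : α :=
  if h : t < k then f ⟨t, h⟩ else a

section extendFin

variable {k : ℕ} {α : Type*} (f : Fin k → α) (a : α)

lemma extendFin_val (j : Fin k) : extendFin f a j = f j := dif_pos j.2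

lemma extendFin_of_lt {t : ℕ} (ht : t < k) : extendFin f a t = f ⟨t, ht⟩ := dif_pos ht

lemma extendFin_of_le {t : ℕ} (ht : k ≤ t) : extendFin f a t = a := dif_neg (by omega)

end extendFin

section Traces

variable {I S : Type*} (F : I → S → S)

def traceFrom (X : ℕ → I) (s₀ : S) : ℕ → S
  | 0 => s₀
  | t + 1 => F (X t) (traceFrom X s₀ t)

lemma isTrace_traceFrom (X : ℕ → I) (s₀ : S) : IsTrace F X (traceFrom F X s₀) :=
  fun _ => rfl

lemma traceFrom_shift_eq {X : ℕ → I} {ℓ : ℕ → S} {m n : ℕ}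
    (hstep : ∀ j, m ≤ j → j < n → ℓ (j + 1) = F (X j) (ℓ j)) :
    ∀ t, m + t ≤ n → traceFrom F (fun t => X (m + t)) (ℓ m) t = ℓ (m + t)
  | 0, _ => rfl
  | t + 1, ht => by
    rw [← add_assoc, hstep (m + t) (by omega) (by omega), ← traceFrom_shift_eq hstep t (by omega)]
    rfl

variable {F} {Init : Set S} {P : I → S → Prop} {k : ℕ}

lemma KInductive.apply_of_isTrace (hind : KInductive k F Init P) {x : ℕ → I} {s : ℕ → S}
    (htr : IsTrace F x s) {n : ℕ} (hn : n ≤ k) (hP : ∀ t < n, P (x t) (s t))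
    (hinit : n < k → s 0 ∈ Init) : P (x n) (s n) := by
  rcases hn.lt_or_eq with hn | rfl
  · exact hind.1 x s htr (hinit hn) n hn
  · exact hind.2 x s htr hP

lemma KInductive.apply_of_segment (hind : KInductive k F Init P) {X : ℕ → I} {ℓ : ℕ → S}
    {m n : ℕ} (hmn : m ≤ n) (hlen : n ≤ m + k)
    (hstep : ∀ j, m ≤ j → j < n → ℓ (j + 1) = F (X j) (ℓ j))
    (hP : ∀ j, m ≤ j → j < n → P (X j) (ℓ j)) (hinit : n < m + k → ℓ m ∈ Init) :
    P (X n) (ℓ n) := by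
  have hs := traceFrom_shift_eq F hstep
  obtain ⟨d, rfl⟩ := Nat.exists_eq_add_of_le hmn
  rw [← hs d le_rfl]
  refine hind.apply_of_isTrace (x := fun t => X (m + t)) (isTrace_traceFrom F _ _) (n := d)
    (by omega) (fun t ht => ?_) fun hd => hinit (by omega)
  rw [hs t (by omega)]
  exact hP (m + t) (by omega) (by omega)

end Traces

section Witness

variable {I S : Type*} {k : ℕ} {F : I → S → S} {Init : Set S} {P : I → S → Prop}

variable (k F Init P) in
/-- The conditions `p0`–`p4` of `WProp`, read on `ℕ`-indexed latches, inputs and bits. -/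
structure WPropNat (X : ℕ → I) (ℓ : ℕ → S) (b : ℕ → Bool) : Prop where
  bit_succ : ∀ j, j + 1 < k → b j = true → b (j + 1) = true
  step : ∀ j, j + 1 < k → b j = true → ℓ (j + 1) = F (X j) (ℓ j)
  prop : ∀ j < k, b j = true → P (X j) (ℓ j)
  init : ∀ j, j + 1 < k → b j = false → b (j + 1) = true → ℓ (j + 1) ∈ Init
  bit_last : b (k - 1) = true

lemma wProp_iff_wPropNat (hk : 0 < k) {i : I} {w : WState k I S} {X : ℕ → I} {ℓ : ℕ → S}
    {b : ℕ → Bool} (hX : ∀ j : Fin k, X j = WX k i w.2.1 j) (hℓ : ∀ j : Fin k, ℓ j = w.1 j)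
    (hb : ∀ j : Fin k, b j = w.2.2 j) :
    WProp k hk F Init P i w ↔ WPropNat k F Init P X ℓ b := by
  simp only [WProp, ← hX, ← hℓ, ← hb, Fin.forall_iff]
  constructor
  · rintro ⟨h0, h1, h2, h3, h4⟩
    exact ⟨fun j hj => h0 j (by omega) (by omega), fun j hj => h1 j (by omega) (by omega), h2,
      fun j hj => h3 (j + 1) hj (by omega), h4⟩
  · rintro ⟨h0, h1, h2, h3, h4⟩
    refine ⟨fun j _ hj => h0 j (by omega), fun j _ hj => h1 j (by omega), h2,
      fun j hjk hj => ?_, h4⟩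
    obtain ⟨j, rfl⟩ := Nat.exists_eq_add_of_le' hj
    exact h3 j hjk

namespace WPropNat

variable {X : ℕ → I} {ℓ : ℕ → S} {b : ℕ → Bool}

lemma bit_of_le (h : WPropNat k F Init P X ℓ b) {m j : ℕ} (hm : b m = true) (hmj : m ≤ j)
    (hjk : j < k) : b j = true := by
  induction j, hmj using Nat.le_induction with
  | base => exact hm
  | succ j _ ih => exact h.bit_succ j hjk (ih (by omega))

lemma prop_next (hind : KInductive k F Init P) (hk : 0 < k) (h : WPropNat k F Init P X ℓ b)
    (hℓ : ℓ k = F (X (k - 1)) (ℓ (k - 1))) : P (X k) (ℓ k) := by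
  classical
  have hex : ∃ m, m < k ∧ b m = true := ⟨k - 1, by omega, h.bit_last⟩
  obtain ⟨hmk, hbm⟩ := Nat.find_spec hex
  set m := Nat.find hex
  have hb (j : ℕ) (hmj : m ≤ j) (hjk : j < k) : b j = true := h.bit_of_le hbm hmj hjk
  refine hind.apply_of_segment (m := m) hmk.le (by omega) (fun j hmj hjk => ?_)
    (fun j hmj hjk => h.prop j hjk (hb j hmj hjk)) (fun hkm => ?_)
  · rcases lt_or_eq_of_le (show j + 1 ≤ k by omega) with hjk' | hjk'
    · exact h.step j hjk' (hb j hmj hjk)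
    · obtain rfl : j = k - 1 := by omega
      rwa [hjk']
  · have hpred : b (m - 1) = false :=
      Bool.eq_false_iff.2 fun h' => Nat.find_min hex (show m - 1 < m by omega) ⟨by omega, h'⟩
    have hm : m - 1 + 1 = m := by omega
    simpa only [hm] using h.init (m - 1) (by omega) hpred (by rwa [hm])

lemma shift (hk : 0 < k) (h : WPropNat k F Init P X ℓ b) (hbk : b k = b (k - 1))
    (hℓ : ℓ k = F (X (k - 1)) (ℓ (k - 1))) (hP : P (X k) (ℓ k)) :
    WPropNat k F Init P (fun j => X (j + 1)) (fun j => ℓ (j + 1)) (fun j => b (j + 1)) where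
  bit_succ j hj hbj := by
    rcases lt_or_eq_of_le (show j + 2 ≤ k by omega) with hjk | rfl
    · exact h.bit_succ (j + 1) hjk hbj
    · exact hbk.trans h.bit_last
  step j hj hbj := by
    rcases lt_or_eq_of_le (show j + 2 ≤ k by omega) with hjk | rfl
    · exact h.step (j + 1) hjk hbj
    · exact hℓ
  prop j hj hbj := by
    rcases lt_or_eq_of_le (show j + 1 ≤ k by omega) with hjk | rfl
    · exact h.prop (j + 1) hjk hbj
    · exact hP
  init j hj hbj hbj' := by
    rcases lt_or_eq_of_le (show j + 2 ≤ k by omega) with hjk | rfl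
    · exact h.init (j + 1) hjk hbj hbj'
    · rw [hbk, show j + 2 - 1 = j + 1 by omega, hbj] at hbj'
      exact absurd hbj' Bool.false_ne_true
  bit_last := by
    rw [Nat.sub_add_cancel hk, hbk]
    exact h.bit_last

end WPropNat

lemma wPropNat_of_init (hind : KInductive k F Init P) (hk : 0 < k) {X : ℕ → I} {ℓ : ℕ → S}
    {b : ℕ → Bool} (hb : ∀ j, j + 1 < k → b j = false) (hbk : b (k - 1) = true)
    (hinit : ℓ (k - 1) ∈ Init) : WPropNat k F Init P X ℓ b where
  bit_succ j hj hbj := by simp [hb j hj] at hbj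
  step j hj hbj := by simp [hb j hj] at hbj
  prop j hj hbj := by
    obtain rfl : j = k - 1 := by
      by_contra hne
      simp [hb j (by omega)] at hbj
    exact hind.apply_of_segment le_rfl (by omega) (fun _ h₁ h₂ => absurd h₂ (not_lt.2 h₁))
      (fun _ h₁ h₂ => absurd h₂ (not_lt.2 h₁)) fun _ => hinit
  init j hj _ hbj := by
    have hjk : j + 1 = k - 1 := by
      by_contra hne
      simp [hb (j + 1) (by omega)] at hbj
    rwa [hjk]
  bit_last := hbk

end Witness

section WTrans

variable {I S : Type*} {k : ℕ} (hk : 0 < k) (F : I → S → S) (i i' : I) (w : WState k I S)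

include hk in
lemma extendFin_wTrans_fst (j : Fin k) :
    extendFin w.1 (F i (w.1 ⟨k - 1, by omega⟩)) (j + 1) = (WTrans k F i w).1 j := by
  grind [extendFin, WTrans]

include hk in
lemma extendFin_wTrans_bits (j : Fin k) :
    extendFin w.2.2 (w.2.2 ⟨k - 1, by omega⟩) (j + 1) = (WTrans k F i w).2.2 j := by
  grind [extendFin, WTrans]

lemma extendFin_wX_wTrans (j : Fin k) :
    extendFin (WX k i w.2.1) i' (j + 1) = WX k i' (WTrans k F i w).2.1 j := by
  grind [extendFin, WTrans, WX]

end WTrans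

section WitnessSystem

variable {I S : Type*} {k : ℕ} {F : I → S → S} {Init : Set S} {P : I → S → Prop}

lemma wProp_of_mem_wInit (hind : KInductive k F Init P) (hk : 0 < k) {w : WState k I S}
    (hw : w ∈ WInit k hk I Init) (i : I) : WProp k hk F Init P i w := by
  obtain ⟨hinit, hbk, hb⟩ := hw
  rw [wProp_iff_wPropNat hk (extendFin_val _ i) (extendFin_val _ (w.1 ⟨0, hk⟩))
    (extendFin_val _ false)]
  refine wPropNat_of_init hind hk (fun j hj => ?_) ?_ ?_
  · rw [extendFin_of_lt _ _ (by omega)]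
    exact hb _ (show j < k - 1 by omega)
  · rwa [extendFin_of_lt _ _ (by omega)]
  · rwa [extendFin_of_lt _ _ (by omega)]

lemma wProp_wTrans (hind : KInductive k F Init P) (hk : 0 < k) {w : WState k I S} {i₀ i₁ : I}
    (h : WProp k hk F Init P i₀ w) : WProp k hk F Init P i₁ (WTrans k F i₀ w) := by
  set last : Fin k := ⟨k - 1, by omega⟩
  set X := extendFin (WX k i₀ w.2.1) i₁
  set ℓ := extendFin w.1 (F i₀ (w.1 last))
  set b := extendFin w.2.2 (w.2.2 last)
  rw [wProp_iff_wPropNat hk (extendFin_val _ i₁) (extendFin_val _ (F i₀ (w.1 last)))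
    (extendFin_val _ (w.2.2 last))] at h
  rw [wProp_iff_wPropNat hk (X := fun j => X (j + 1)) (ℓ := fun j => ℓ (j + 1))
    (b := fun j => b (j + 1)) (extendFin_wX_wTrans F i₀ i₁ w) (extendFin_wTrans_fst hk F i₀ w)
    (extendFin_wTrans_bits hk F i₀ w)]
  have hℓ : ℓ k = F (X (k - 1)) (ℓ (k - 1)) := by
    simp only [ℓ, X, extendFin_of_le _ _ le_rfl, extendFin_of_lt _ _ (Nat.sub_lt hk one_pos), WX]
    rfl
  have hb : b k = b (k - 1) := by
    simp only [b, extendFin_of_le _ _ le_rfl, extendFin_of_lt _ _ (Nat.sub_lt hk one_pos)]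
    rfl
  exact h.shift hk hb hℓ (h.prop_next hind hk hℓ)

end WitnessSystem

/-- If `P` is `k`-inductive in `C`, then `P'_k` is `1`-inductive in the
witness system `C'_k`. -/
theorem kInductive_witness_oneInductive (k : ℕ) (hk : 0 < k) {I S : Type*}
    (F : I → S → S) (Init : Set S) (P : I → S → Prop)
    (hind : KInductive k F Init P) :
    (∀ w ∈ WInit k hk I Init, ∀ i : I, WProp k hk F Init P i w) ∧
    (∀ (w : WState k I S) (i0 i1 : I),
      WProp k hk F Init P i0 w → WProp k hk F Init P i1 (WTrans k F i0 w)) :=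
  ⟨fun _ hw i => wProp_of_mem_wInit hind hk hw i, fun _ _ _ h => wProp_wTrans hind hk h⟩
end

section
/- Fix k ≥ 1 and let C = (F, Init, P) be a deterministic transition system over input type I and state type S. If the consecution check of depth 1 passes in the witness system C'_k (i.e., for every witness state w and all inputs i0, i1, P'_k i0 w implies P'_k i1 (F'_k i0 w)), then the consecution check of depth k passes in C: every trace of C (not necessarily initialized) satisfying P (x n) (s n) for all n < k also satisfies P (x k) (s k). -/
/-!
The last `k` steps of a trace, with every initialization bit set, form a witness state satisfying
`P'_k` under the input `x (k-1)`: `p0` and `p4` hold trivially, `p3` vacuously, `p1` is the trace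
equation and `p2` the hypothesis on the first `k` steps. One step of `F'_k` on that input puts
`s k` into the last latch copy, and `p2` at the last position, with next input `x k`, is
`P (x k) (s k)`.
-/

section WitnessSystem

variable {I S : Type*} (k : ℕ)

def traceWindow (x : ℕ → I) (s : ℕ → S) : WState k I S :=
  ⟨fun j => s j, fun j => x j, fun _ => true⟩

theorem WX_traceWindow (x : ℕ → I) (j : Fin k) :
    WX k (x (k - 1)) (fun j : Fin (k - 1) => x j) j = x j := by
  unfold WX
  split_ifs with h
  · rw [h]
  · rfl

theorem wProp_traceWindow (hk : 0 < k) (F : I → S → S) (Init : Set S) (P : I → S → Prop)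
    {x : ℕ → I} {s : ℕ → S} (htr : IsTrace F x s) (hP : ∀ n < k, P (x n) (s n)) :
    WProp k hk F Init P (x (k - 1)) (traceWindow k x s) := by
  refine ⟨fun _ _ _ => rfl, fun j _ _ => ?_, fun j _ => ?_,
    fun _ _ hfalse _ => Bool.noConfusion hfalse, rfl⟩
  · simpa only [traceWindow, WX_traceWindow] using htr j
  · simpa only [traceWindow, WX_traceWindow] using hP j j.isLt

theorem WTrans_last (hk : 0 < k) (F : I → S → S) (i : I) (w : WState k I S) :
    (WTrans k F i w).1 ⟨k - 1, by omega⟩ = F i (w.1 ⟨k - 1, by omega⟩) :=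
  dif_pos rfl

theorem WProp.prop_last {hk : 0 < k} {F : I → S → S} {Init : Set S} {P : I → S → Prop}
    {i : I} {w : WState k I S} (hw : WProp k hk F Init P i w) :
    P i (w.1 ⟨k - 1, by omega⟩) := by
  have h := hw.2.2.1 ⟨k - 1, by omega⟩ hw.2.2.2.2
  rwa [WX, dif_pos rfl] at h

end WitnessSystem

theorem IsTrace.eq_succ_pred {I S : Type*} {F : I → S → S} {x : ℕ → I} {s : ℕ → S}
    (htr : IsTrace F x s) {k : ℕ} (hk : 0 < k) : s k = F (x (k - 1)) (s (k - 1)) := by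
  simpa only [Nat.sub_add_cancel hk] using htr (k - 1)

/-- If the consecution check of depth `1` passes in the witness system `C'_k`,
then the consecution check of depth `k` passes in `C`. -/
theorem witness_consecution_reverse (k : ℕ) (hk : 0 < k) {I S : Type*}
    (F : I → S → S) (Init : Set S) (P : I → S → Prop)
    (hconsec' : ∀ (w : WState k I S) (i0 i1 : I),
      WProp k hk F Init P i0 w → WProp k hk F Init P i1 (WTrans k F i0 w)) :
    ∀ x s, IsTrace F x s → (∀ n < k, P (x n) (s n)) → P (x k) (s k) := by
  intro x s htr hP
  have hnext := (hconsec' _ (x (k - 1)) (x k) (wProp_traceWindow k hk F Init P htr hP)).prop_last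
  rwa [WTrans_last k hk, traceWindow, ← htr.eq_succ_pred hk] at hnext
end
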